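/- Let F : Ring → Set be a left exact functor. Then the collection of F-fibrations, together with quasi-isomorphisms as weak equivalences, satisfies the factorization axiom: any ring homomorphism u : A → B factors as u = p ∘ i where p is an F-fibration and i is an elementary homotopy equivalence. Concretely, with A' = A ×_B B[x] the pullback of u along ∂⁰, i : A → A' is the map a ↦ (a, u(a)) and p : A' → B is (a, f) ↦ f(1). -/

import Mathlib

set_option maxHeartbeats 1000000
set_option synthInstance.maxHeartbeats 400000

noncomputable section
open scoped Classical
open Finsupp AddMonoidAlgebra Unitization

/-- The unitization of a non-unital ring. -/
abbrev URing (R : Type) [NonUnitalRing R] : Type := Unitization ℤ R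

/-- Polynomial-type algebra over the unitization, with exponent monoid `G`. -/
abbrev MA (R : Type) [NonUnitalRing R] (G : Type) [AddCommMonoid G] : Type :=
  AddMonoidAlgebra (URing R) G

instance MA.instRing (R : Type) [NonUnitalRing R] (G : Type) [AddCommMonoid G] : Ring (MA R G) :=
  @AddMonoidAlgebra.ring (URing R) G Unitization.instRing _

variable {R : Type} [NonUnitalRing R] {G : Type} [AddCommMonoid G]

/-- `fst : Unitization ℤ R → ℤ` as an additive monoid hom. -/
def fstAdd (R : Type) [NonUnitalRing R] : URing R →+ ℤ where
  toFun x := x.fst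
  map_zero' := rfl
  map_add' _ _ := rfl

theorem coeff_fst_mul (p q : MA R G) (a : G) (hp : ∀ b, (p.coeff b).fst = 0) :
    ((p * q).coeff a).fst = 0 := by
  have h1 : ∀ (s : Finset G) (f : G → URing R),
      (∑ x ∈ s, f x).fst = ∑ x ∈ s, (f x).fst := fun s f => map_sum (fstAdd R) f s
  rw [AddMonoidAlgebra.mul_apply, Finsupp.sum, h1]
  refine Finset.sum_eq_zero fun b _ => ?_
  rw [Finsupp.sum, h1]
  refine Finset.sum_eq_zero fun c _ => ?_
  show (if b + c = a then p.coeff b * q.coeff c else 0).fst = 0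
  split
  · rw [Unitization.fst_mul, hp b, zero_mul]
  · rfl

/-- The non-unital subring of `MA R G` of elements all of whose coefficients lie in `R`
(i.e. have vanishing unital component).  This is the polynomial ring with coefficients in the
non-unital ring `R` and exponents in `G`. -/
def coeffSub (R : Type) [NonUnitalRing R] (G : Type) [AddCommMonoid G] :
    NonUnitalSubring (MA R G) where
  carrier := {p | ∀ a, (p.coeff a).fst = 0}
  add_mem' := by intro p q hp hq a; rw [AddMonoidAlgebra.coeff_add, Finsupp.add_apply, Unitization.fst_add, hp a, hq a, add_zero]
  zero_mem' := by intro a; rfl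
  neg_mem' := by intro p hp a; show (-(p.coeff a)).fst = 0; rw [ Unitization.fst_neg, hp a, neg_zero]
  mul_mem' := by intro p q hp _; exact fun a => coeff_fst_mul p q a hp

/-- The polynomial ring `R[x]` over a non-unital ring `R`. -/
abbrev NPX (R : Type) [NonUnitalRing R] : Type := ↥(coeffSub R ℕ)

/-- The monoid homomorphism sending a monomial exponent to `1` if it is zero and `0` otherwise
(evaluation of all variables at `0`). -/
def gZero (R G : Type) [NonUnitalRing R] [AddCommMonoid G]
    (hG : ∀ a b : G, a + b = 0 → a = 0 ∧ b = 0) : Multiplicative G →* URing R where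
  toFun a := if a.toAdd = 0 then (1 : URing R) else 0
  map_one' := if_pos rfl
  map_mul' a b := by
    show (if Multiplicative.toAdd a + Multiplicative.toAdd b = 0 then (1 : URing R) else 0)
      = (if Multiplicative.toAdd a = 0 then (1 : URing R) else 0)
        * (if Multiplicative.toAdd b = 0 then (1 : URing R) else 0)
    by_cases ha : Multiplicative.toAdd a = 0 <;> by_cases hb : Multiplicative.toAdd b = 0
    · rw [if_pos (by rw [ha, hb, add_zero]), if_pos ha, if_pos hb, one_mul]
    · rw [if_neg (fun h => hb (hG _ _ h).2), if_neg hb, mul_zero]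
    · rw [if_neg (fun h => ha (hG _ _ h).1), if_neg ha, zero_mul]
    · rw [if_neg (fun h => ha (hG _ _ h).1), if_neg ha, zero_mul]

/-- Evaluation of all variables at `0`, on the unitization level. -/
abbrev ev0U (R G : Type) [NonUnitalRing R] [AddCommMonoid G]
    (hG : ∀ a b : G, a + b = 0 → a = 0 ∧ b = 0) : MA R G →+* URing R :=
  @liftNCRingHom (URing R) G (URing R) _ _ _ (RingHom.id (URing R)) (gZero R G hG) (fun x y => by
    rw [RingHom.id_apply]
    rcases em (Multiplicative.toAdd y = 0) with h | h
    · rw [show (gZero R G hG) y = 1 from if_pos h]; exact Commute.one_right x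
    · rw [show (gZero R G hG) y = 0 from if_neg h]; exact Commute.zero_right x)

/-- Evaluation of all variables at `1` (sum of coefficients), on the unitization level. -/
abbrev ev1U (R G : Type) [NonUnitalRing R] [AddCommMonoid G] : MA R G →+* URing R :=
  @liftNCRingHom (URing R) G (URing R) _ _ _ (RingHom.id (URing R)) 1 (fun x y => by
    rw [RingHom.id_apply, MonoidHom.one_apply]
    exact Commute.one_right x)

theorem liftNC_eq_sum (f : URing R →+* URing R) (g : Multiplicative G →* URing R)
    (hc : ∀ x y, Commute (f x) (g y)) (p : MA R G) :
    (@liftNCRingHom (URing R) G (URing R) _ _ _ f g hc) p = p.coeff.sum fun a c => f c * g (Multiplicative.ofAdd a) := by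
  conv_lhs => rw [← AddMonoidAlgebra.sum_coeff_single p]
  rw [map_finsuppSum]
  refine Finsupp.sum_congr fun a _ => ?_
  exact AddMonoidAlgebra.liftNC_single _ _ a (p.coeff a)

theorem fst_liftNC (g : Multiplicative G →* URing R)
    (hc : ∀ x y, Commute ((RingHom.id (URing R)) x) (g y))
    (p : MA R G) (hp : ∀ a, (p.coeff a).fst = 0) :
    ((@liftNCRingHom (URing R) G (URing R) _ _ _ (RingHom.id (URing R)) g hc) p).fst = 0 := by
  rw [liftNC_eq_sum, Finsupp.sum,
    show (∑ a ∈ p.coeff.support, (RingHom.id (URing R)) (p.coeff a) * g (Multiplicative.ofAdd a)).fst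
      = ∑ a ∈ p.coeff.support, ((RingHom.id (URing R)) (p.coeff a) * g (Multiplicative.ofAdd a)).fst
      from map_sum (fstAdd R) _ _]
  refine Finset.sum_eq_zero fun a _ => ?_
  rw [Unitization.fst_mul]
  show (p.coeff a).fst * _ = 0
  rw [hp a, zero_mul]

/-- Corestriction of a unitization-level ring homomorphism to the non-unital coefficient ring. -/
def toRHom (R G : Type) [NonUnitalRing R] [AddCommMonoid G] (Ψ : MA R G →+* URing R)
    (h : ∀ p : ↥(coeffSub R G), (Ψ ↑p).fst = 0) :
    ↥(coeffSub R G) →ₙ+* R where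
  toFun p := (Ψ ↑p).snd
  map_zero' := by simp
  map_add' p q := by push_cast [map_add]; simp
  map_mul' p q := by
    push_cast [map_mul]
    rw [Unitization.snd_mul, h p, h q, zero_smul, zero_smul, zero_add, zero_add]

theorem hGnat : ∀ a b : ℕ, a + b = 0 → a = 0 ∧ b = 0 := fun _ _ h => Nat.add_eq_zero.mp h

/-- Evaluation of all variables at `0`, as a homomorphism of non-unital rings. -/
def evZ (R G : Type) [NonUnitalRing R] [AddCommMonoid G]
    (hG : ∀ a b : G, a + b = 0 → a = 0 ∧ b = 0) : ↥(coeffSub R G) →ₙ+* R :=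
  toRHom R G (ev0U R G hG) (fun p => fst_liftNC _ _ _ p.2)

/-- Evaluation of all variables at `1` (sum of coefficients), as a homomorphism of
non-unital rings. -/
def evO (R G : Type) [NonUnitalRing R] [AddCommMonoid G] : ↥(coeffSub R G) →ₙ+* R :=
  toRHom R G (ev1U R G) (fun p => fst_liftNC _ _ _ p.2)

/-- Evaluation of the polynomial variable at `0`, i.e. `∂⁰ : R[x] → R`. -/
def ev0 (R : Type) [NonUnitalRing R] : NPX R →ₙ+* R := evZ R ℕ hGnat

/-- Evaluation of the polynomial variable at `1` (sum of coefficients), i.e. `∂¹ : R[x] → R`. -/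
def ev1 (R : Type) [NonUnitalRing R] : NPX R →ₙ+* R := evO R ℕ

/-- The constant-inclusion of the coefficient ring into a polynomial ring. -/
def constG (R G : Type) [NonUnitalRing R] [AddCommMonoid G] : R →ₙ+* ↥(coeffSub R G) where
  toFun r := ⟨AddMonoidAlgebra.single (0 : G) ((r : R) : URing R), by
    intro a
    rw [AddMonoidAlgebra.coeff_single, Finsupp.single_apply]
    split <;> simp⟩
  map_zero' := Subtype.ext (by
    show AddMonoidAlgebra.single (0 : G) (((0 : R) : URing R)) = (0 : MA R G)
    rw [Unitization.inr_zero, AddMonoidAlgebra.single_zero])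
  map_add' r s := Subtype.ext (by
    show AddMonoidAlgebra.single (0 : G) (((r + s : R) : URing R))
      = (AddMonoidAlgebra.single (0 : G) ((r : R) : URing R) : MA R G)
        + AddMonoidAlgebra.single (0 : G) ((s : R) : URing R)
    rw [Unitization.inr_add, AddMonoidAlgebra.single_add])
  map_mul' r s := Subtype.ext (by
    show AddMonoidAlgebra.single (0 : G) (((r * s : R) : URing R))
      = (AddMonoidAlgebra.single (0 : G) ((r : R) : URing R) : MA R G)
        * AddMonoidAlgebra.single (0 : G) ((s : R) : URing R)
    rw [AddMonoidAlgebra.single_mul_single, zero_add, Unitization.inr_mul])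

/-- The constant-inclusion `R → R[x]`. -/
def constX (R : Type) [NonUnitalRing R] : R →ₙ+* NPX R := constG R ℕ

/-- Two homomorphisms of non-unital rings `f₀ f₁ : S → R` are elementary homotopic if
there is a homomorphism `H : S → R[x]` with `∂⁰ ∘ H = f₀` and `∂¹ ∘ H = f₁`. -/
def ElemHomotopic {S R : Type} [NonUnitalRing S] [NonUnitalRing R] (f₀ f₁ : S →ₙ+* R) : Prop :=
  ∃ H : S →ₙ+* NPX R, (ev0 R).comp H = f₀ ∧ (ev1 R).comp H = f₁

/-- The monomial `r·t^a` in the polynomial ring over a non-unital ring. -/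
def mono {R : Type} [NonUnitalRing R] {G : Type} [AddCommMonoid G] (a : G) (r : R) :
    ↥(coeffSub R G) :=
  ⟨AddMonoidAlgebra.single a ((r : R) : URing R), by
    intro b
    rw [AddMonoidAlgebra.coeff_single, Finsupp.single_apply]
    split <;> simp⟩

theorem evZ_mono {R G : Type} [NonUnitalRing R] [AddCommMonoid G]
    (hG : ∀ a b : G, a + b = 0 → a = 0 ∧ b = 0) (a : G) (r : R) :
    evZ R G hG (mono a r) = if a = 0 then r else 0 := by
  show ((ev0U R G hG) (AddMonoidAlgebra.single a ((r : R) : URing R))).snd = _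
  rw [show (ev0U R G hG) (AddMonoidAlgebra.single a ((r : R) : URing R))
      = ((r : R) : URing R) * (gZero R G hG) (Multiplicative.ofAdd a)
      from AddMonoidAlgebra.liftNC_single _ _ _ _]
  by_cases h : a = 0
  · rw [show (gZero R G hG) (Multiplicative.ofAdd a) = 1 from if_pos h, mul_one, if_pos h,
      Unitization.snd_inr]
  · rw [show (gZero R G hG) (Multiplicative.ofAdd a) = 0 from if_neg h, mul_zero, if_neg h,
      Unitization.snd_zero]

theorem evO_mono {R G : Type} [NonUnitalRing R] [AddCommMonoid G] (a : G) (r : R) :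
    evO R G (mono a r) = r := by
  show ((ev1U R G) (AddMonoidAlgebra.single a ((r : R) : URing R))).snd = _
  rw [show (ev1U R G) (AddMonoidAlgebra.single a ((r : R) : URing R))
      = ((r : R) : URing R) * (1 : Multiplicative G →* URing R) (Multiplicative.ofAdd a)
      from AddMonoidAlgebra.liftNC_single _ _ _ _]
  rw [MonoidHom.one_apply, mul_one, Unitization.snd_inr]

theorem coeff_fst_mul' {R G : Type} [NonUnitalRing R] [AddCommMonoid G]
    (p q : MA R G) (a : G) (hq : ∀ b, (q.coeff b).fst = 0) : ((p * q).coeff a).fst = 0 := by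
  have h1 : ∀ (s : Finset G) (f : G → URing R),
      (∑ x ∈ s, f x).fst = ∑ x ∈ s, (f x).fst := fun s f => map_sum (fstAdd R) f s
  rw [AddMonoidAlgebra.mul_apply, Finsupp.sum, h1]
  refine Finset.sum_eq_zero fun b _ => ?_
  rw [Finsupp.sum, h1]
  refine Finset.sum_eq_zero fun c _ => ?_
  show (if b + c = a then p.coeff b * q.coeff c else 0).fst = 0
  split
  · rw [Unitization.fst_mul, hq c, mul_zero]
  · rfl

theorem fst_mapDomain {R G G' : Type} [NonUnitalRing R] [AddCommMonoid G] [AddCommMonoid G']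
    (f : G → G') (p : MA R G) (hp : ∀ b, (p.coeff b).fst = 0) (a : G') :
    ((Finsupp.mapDomain f p.coeff) a).fst = 0 := by
  have h1 : ∀ (s : Finset G) (g : G → URing R),
      (∑ x ∈ s, g x).fst = ∑ x ∈ s, (g x).fst := fun s g => map_sum (fstAdd R) g s
  rw [Finsupp.mapDomain, Finsupp.sum_apply, Finsupp.sum, h1]
  refine Finset.sum_eq_zero fun b _ => ?_
  rw [Finsupp.single_apply]
  split
  · exact hp b
  · rfl

/-- Multiplication by `x^k` on `R[x]` (shift of exponents). -/
def shiftPoly (R : Type) [NonUnitalRing R] (k : ℕ) (p : NPX R) : NPX R :=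
  ⟨.ofCoeff (Finsupp.mapDomain (· + k) (p : MA R ℕ).coeff), fun a => fst_mapDomain _ (p : MA R ℕ) p.2 a⟩

/-- The path ring `ER = ker(∂⁰ : R[x] → R) = xR[x]` as a non-unital subring of `R[x]`. -/
def ERsub (R : Type) [NonUnitalRing R] : NonUnitalSubring (NPX R) where
  carrier := {p | ev0 R p = 0}
  add_mem' := by intro p q hp hq; show ev0 R (p + q) = 0; rw [map_add, hp, hq, add_zero]
  zero_mem' := map_zero _
  neg_mem' := by intro p hp; show ev0 R (-p) = 0; rw [map_neg, hp, neg_zero]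
  mul_mem' := by intro p q hp hq; show ev0 R (p * q) = 0; rw [map_mul, hp, zero_mul]

/-- The loop ring `ΩR = ker(∂⁰) ∩ ker(∂¹) ⊆ R[x]` as a non-unital subring of `R[x]`. -/
def OmegaSub (R : Type) [NonUnitalRing R] : NonUnitalSubring (NPX R) where
  carrier := {p | ev0 R p = 0 ∧ ev1 R p = 0}
  add_mem' := by
    intro p q hp hq
    exact ⟨by rw [map_add, hp.1, hq.1, add_zero], by rw [map_add, hp.2, hq.2, add_zero]⟩
  zero_mem' := ⟨map_zero _, map_zero _⟩
  neg_mem' := by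
    intro p hp
    exact ⟨by rw [map_neg, hp.1, neg_zero], by rw [map_neg, hp.2, neg_zero]⟩
  mul_mem' := by
    intro p q hp hq
    exact ⟨by rw [map_mul, hp.1, zero_mul], by rw [map_mul, hp.2, zero_mul]⟩

theorem ev0_mono {R : Type} [NonUnitalRing R] (n : ℕ) (r : R) :
    ev0 R (mono n r) = if n = 0 then r else 0 := by
  by_cases h : n = 0
  · rw [if_pos h]
    have := evZ_mono (R := R) hGnat n r
    rwa [if_pos h] at this
  · rw [if_neg h]
    have := evZ_mono (R := R) hGnat n r
    rwa [if_neg h] at this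

theorem ev1_mono {R : Type} [NonUnitalRing R] (n : ℕ) (r : R) :
    ev1 R (mono n r) = r := evO_mono n r

theorem constX_eq_mono {R : Type} [NonUnitalRing R] (r : R) :
    constX R r = mono 0 r := Subtype.ext rfl

theorem ev0_constX {R : Type} [NonUnitalRing R] (r : R) : ev0 R (constX R r) = r := by
  rw [constX_eq_mono, ev0_mono]; exact if_pos rfl

theorem ev1_constX {R : Type} [NonUnitalRing R] (r : R) : ev1 R (constX R r) = r := by
  rw [constX_eq_mono]; exact ev1_mono 0 r

/-- The coefficient-wise map `R[x] → S[x]` induced by a homomorphism `f : R → S`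
(as a plain function). -/
def polyMapF {A B : Type} [NonUnitalRing A] [NonUnitalRing B] (f : A →ₙ+* B) (p : NPX A) :
    NPX B :=
  ⟨.ofCoeff (Finsupp.mapRange (fun c => ((f c.snd : B) : URing B)) (by simp) (p : MA A ℕ).coeff),
   by intro a; rw [Finsupp.mapRange_apply]; simp⟩

/-- A (set-valued) functor on the category of non-unital rings. -/
structure RingFunctor : Type 1 where
  obj : (R : Type) → [NonUnitalRing R] → Type
  map : {R S : Type} → [NonUnitalRing R] → [NonUnitalRing S] → (R →ₙ+* S) → obj R → obj S
  map_id : ∀ (R : Type) [NonUnitalRing R], map (NonUnitalRingHom.id R) = id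
  map_comp : ∀ {R S T : Type} [NonUnitalRing R] [NonUnitalRing S] [NonUnitalRing T]
    (f : R →ₙ+* S) (g : S →ₙ+* T), map (g.comp f) = map g ∘ map f

theorem coe_int_eq_inl {B : Type} [NonUnitalRing B] (k : ℤ) :
    ((k : URing B)) = Unitization.inl k :=
  (eq_intCast (Unitization.inlRingHom ℤ B) k).symm

/-- The unitization-level extension of a homomorphism of non-unital rings. -/
def uMap {A B : Type} [NonUnitalRing A] [NonUnitalRing B] (f : A →ₙ+* B) :
    URing A →+* URing B where
  toFun x := Unitization.inl x.fst + ((f x.snd : B) : URing B)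
  map_one' := by simp
  map_zero' := by simp
  map_add' x y := by
    apply Unitization.ext
    · simp
    · simp [map_add, add_add_add_comm]
  map_mul' x y := by
    apply Unitization.ext
    · simp
    · simp [Unitization.snd_mul, map_add, map_mul, map_zsmul, add_assoc,
        coe_int_eq_inl, Unitization.fst_inl, Unitization.snd_inl]

theorem uMap_fst {A B : Type} [NonUnitalRing A] [NonUnitalRing B] (f : A →ₙ+* B)
    (x : URing A) : (uMap f x).fst = x.fst := by
  show (Unitization.inl x.fst + ((f x.snd : B) : URing B)).fst = x.fst
  simp

/-- The induced map `R[G] → S[G]` on polynomial rings over the unitizations. -/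
def MAmap {A B G : Type} [NonUnitalRing A] [NonUnitalRing B] [AddCommMonoid G]
    (f : A →ₙ+* B) : MA A G →+* MA B G :=
  liftNCRingHom ((AddMonoidAlgebra.singleZeroRingHom).comp (uMap f))
    (AddMonoidAlgebra.of (URing B) G) (fun x y => by
      show Commute (AddMonoidAlgebra.single 0 (uMap f x)) _
      rw [AddMonoidAlgebra.of_apply]
      unfold Commute SemiconjBy
      rw [AddMonoidAlgebra.single_mul_single, AddMonoidAlgebra.single_mul_single,
        zero_add, add_zero, mul_one, one_mul])

theorem MAmap_apply {A B G : Type} [NonUnitalRing A] [NonUnitalRing B] [AddCommMonoid G]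
    (f : A →ₙ+* B) (p : MA A G) (a : G) : (MAmap f p).coeff a = uMap f (p.coeff a) := by
  have hsingle : ∀ (b : G) (c : URing A),
      MAmap f (AddMonoidAlgebra.single b c) = AddMonoidAlgebra.single b (uMap f c) := by
    intro b c
    show liftNCRingHom _ _ _ (AddMonoidAlgebra.single b c) = _
    rw [show (liftNCRingHom ((AddMonoidAlgebra.singleZeroRingHom).comp (uMap f))
        (AddMonoidAlgebra.of (URing B) G) _) (AddMonoidAlgebra.single b c)
        = ((AddMonoidAlgebra.singleZeroRingHom).comp (uMap f)) c
          * (AddMonoidAlgebra.of (URing B) G) (Multiplicative.ofAdd b)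
      from AddMonoidAlgebra.liftNC_single _ _ _ _]
    show AddMonoidAlgebra.single 0 (uMap f c) * _ = _
    rw [AddMonoidAlgebra.of_apply, AddMonoidAlgebra.single_mul_single, zero_add, mul_one, toAdd_ofAdd]
  conv_lhs => rw [← AddMonoidAlgebra.sum_coeff_single p, map_finsuppSum]
  rw [AddMonoidAlgebra.coeff_finsuppSum, Finsupp.sum_apply, Finsupp.sum, Finset.sum_congr rfl
    (fun b _ => by rw [hsingle b (p.coeff b), AddMonoidAlgebra.coeff_single])]
  rw [Finset.sum_congr rfl (fun b _ => Finsupp.single_apply)]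
  rw [Finset.sum_ite_eq' p.coeff.support a fun b => uMap f (p.coeff b)]
  split
  · rfl
  · rename_i h
    rw [Finsupp.notMem_support_iff.mp h, map_zero]

/-- The subring of `MA R (Fin n →₀ ℕ)` corresponding to the `n`-th iterated path ring
`EⁿR = (x₁⋯xₙ)·R[x₁,…,xₙ]`: elements with coefficients in `R` supported on exponents that
are positive in every variable. -/
def EnSub (R : Type) [NonUnitalRing R] (n : ℕ) : NonUnitalSubring (MA R (Fin n →₀ ℕ)) where
  carrier := {p | (∀ a, (p.coeff a).fst = 0) ∧ ∀ a : Fin n →₀ ℕ, (∃ i, a i = 0) → p.coeff a = 0}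
  add_mem' := by
    rintro p q ⟨hp1, hp2⟩ ⟨hq1, hq2⟩
    refine ⟨fun a => by rw [AddMonoidAlgebra.coeff_add, Finsupp.add_apply, Unitization.fst_add, hp1 a, hq1 a, add_zero],
      fun a ha => by rw [AddMonoidAlgebra.coeff_add, Finsupp.add_apply, hp2 a ha, hq2 a ha, add_zero]⟩
  zero_mem' := ⟨fun a => rfl, fun a _ => rfl⟩
  neg_mem' := by
    rintro p ⟨hp1, hp2⟩
    refine ⟨fun a => by show (-(p.coeff a)).fst = 0; rw [Unitization.fst_neg, hp1 a, neg_zero],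
      fun a ha => by show -(p.coeff a) = 0; rw [ hp2 a ha, neg_zero]⟩
  mul_mem' := by
    rintro p q ⟨hp1, hp2⟩ ⟨hq1, hq2⟩
    refine ⟨fun a => coeff_fst_mul p q a hp1, ?_⟩
    rintro a ⟨i, hi⟩
    rw [AddMonoidAlgebra.mul_apply, Finsupp.sum]
    refine Finset.sum_eq_zero fun b _ => ?_
    rw [Finsupp.sum]
    refine Finset.sum_eq_zero fun c _ => ?_
    split
    · rename_i h
      have hbc : b i + c i = 0 := by
        have := congrArg (fun v : Fin n →₀ ℕ => v i) h
        simpa [hi] using this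
      rw [hp2 b ⟨i, (Nat.add_eq_zero.mp hbc).1⟩, zero_mul]
    · rfl

/-- The induced map `EⁿB → EⁿC` of iterated path rings. -/
def EnMap {B C : Type} [NonUnitalRing B] [NonUnitalRing C] (g : B →ₙ+* C) (n : ℕ) :
    ↥(EnSub B n) →ₙ+* ↥(EnSub C n) where
  toFun p := ⟨MAmap g ↑p, by
    rcases p.2 with ⟨h1, h2⟩
    exact ⟨fun a => by rw [MAmap_apply, uMap_fst, h1 a],
      fun a ha => by rw [MAmap_apply, h2 a ha, map_zero]⟩⟩
  map_zero' := Subtype.ext (map_zero (MAmap g))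
  map_add' p q := Subtype.ext (by
    show MAmap g ((p : MA B (Fin n →₀ ℕ)) + (q : MA B (Fin n →₀ ℕ)))
      = MAmap g (p : MA B (Fin n →₀ ℕ)) + MAmap g (q : MA B (Fin n →₀ ℕ))
    exact map_add _ _ _)
  map_mul' p q := Subtype.ext (by
    show MAmap g ((p : MA B (Fin n →₀ ℕ)) * (q : MA B (Fin n →₀ ℕ)))
      = MAmap g (p : MA B (Fin n →₀ ℕ)) * MAmap g (q : MA B (Fin n →₀ ℕ))
    exact map_mul _ _ _)

/-- A surjective homomorphism `g : B → C` is an `F`-fibration if `F(Eⁿg)` is surjective for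
all `n > 0`. -/
def FFibration (F : RingFunctor) {B C : Type} [NonUnitalRing B] [NonUnitalRing C]
    (g : B →ₙ+* C) : Prop :=
  Function.Surjective g ∧ ∀ n : ℕ, 0 < n → Function.Surjective (F.map (EnMap g n))

/-- The pullback of `f : A → C` and `g : B → C` as a non-unital subring of `A × B`. -/
def pb2Sub {A B C : Type} [NonUnitalRing A] [NonUnitalRing B] [NonUnitalRing C]
    (f : A →ₙ+* C) (g : B →ₙ+* C) : NonUnitalSubring (A × B) where
  carrier := {z | f z.1 = g z.2}
  add_mem' := by
    intro z w hz hw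
    show f (z.1 + w.1) = g (z.2 + w.2)
    rw [map_add, map_add, hz, hw]
  zero_mem' := by show f 0 = g 0; rw [map_zero, map_zero]
  neg_mem' := by intro z hz; show f (-z.1) = g (-z.2); rw [map_neg, map_neg, hz]
  mul_mem' := by
    intro z w hz hw
    show f (z.1 * w.1) = g (z.2 * w.2)
    rw [map_mul, map_mul, hz, hw]

/-- First projection of the pullback. -/
def pb2Pr1 {A B C : Type} [NonUnitalRing A] [NonUnitalRing B] [NonUnitalRing C]
    (f : A →ₙ+* C) (g : B →ₙ+* C) : ↥(pb2Sub f g) →ₙ+* A :=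
  (NonUnitalRingHom.fst A B).comp (NonUnitalSubringClass.subtype (pb2Sub f g))

/-- Second projection of the pullback. -/
def pb2Pr2 {A B C : Type} [NonUnitalRing A] [NonUnitalRing B] [NonUnitalRing C]
    (f : A →ₙ+* C) (g : B →ₙ+* C) : ↥(pb2Sub f g) →ₙ+* B :=
  (NonUnitalRingHom.snd A B).comp (NonUnitalSubringClass.subtype (pb2Sub f g))

theorem pb2_comm {A B C : Type} [NonUnitalRing A] [NonUnitalRing B] [NonUnitalRing C]
    (f : A →ₙ+* C) (g : B →ₙ+* C) : f.comp (pb2Pr1 f g) = g.comp (pb2Pr2 f g) :=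
  NonUnitalRingHom.ext fun z => z.2

/-- A functor on rings is left exact if it preserves the zero object and pullbacks
(hence all finite limits). -/
def LeftExact (F : RingFunctor) : Prop :=
  (∀ x y : F.obj PUnit, x = y) ∧
  ∀ (A B C : Type) [NonUnitalRing A] [NonUnitalRing B] [NonUnitalRing C]
    (f : A →ₙ+* C) (g : B →ₙ+* C),
    Function.Bijective (fun z : F.obj ↥(pb2Sub f g) =>
      (⟨(F.map (pb2Pr1 f g) z, F.map (pb2Pr2 f g) z), by
        have h1 : F.map f (F.map (pb2Pr1 f g) z) = F.map (f.comp (pb2Pr1 f g)) z := by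
          rw [F.map_comp]; rfl
        have h2 : F.map g (F.map (pb2Pr2 f g) z) = F.map (g.comp (pb2Pr2 f g)) z := by
          rw [F.map_comp]; rfl
        rw [h1, h2, pb2_comm]⟩ :
        {w : F.obj A × F.obj B // F.map f w.1 = F.map g w.2}))

/-- The pullback `A' = A ×_B B[x]` of `u : A → B` along `∂⁰ : B[x] → B`. -/
def pbSub {A B : Type} [NonUnitalRing A] [NonUnitalRing B] (u : A →ₙ+* B) :
    NonUnitalSubring (A × NPX B) where
  carrier := {z | u z.1 = ev0 B z.2}
  add_mem' := by
    intro z w hz hw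
    show u (z.1 + w.1) = ev0 B (z.2 + w.2)
    rw [map_add, map_add, hz, hw]
  zero_mem' := by show u 0 = ev0 B 0; rw [map_zero, map_zero]
  neg_mem' := by intro z hz; show u (-z.1) = ev0 B (-z.2); rw [map_neg, map_neg, hz]
  mul_mem' := by
    intro z w hz hw
    show u (z.1 * w.1) = ev0 B (z.2 * w.2)
    rw [map_mul, map_mul, hz, hw]

/-- The map `i : A → A'`, `a ↦ (a, u(a))`. -/
def pbI {A B : Type} [NonUnitalRing A] [NonUnitalRing B] (u : A →ₙ+* B) :
    A →ₙ+* ↥(pbSub u) where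
  toFun a := ⟨(a, constX B (u a)), by
    show u a = ev0 B (constX B (u a)); rw [ev0_constX]⟩
  map_zero' := Subtype.ext (by
    show ((0 : A), constX B (u 0)) = ((0 : A), (0 : NPX B))
    rw [map_zero, map_zero])
  map_add' a b := Subtype.ext (by
    show (a + b, constX B (u (a + b))) = (a, constX B (u a)) + (b, constX B (u b))
    rw [map_add, map_add]; rfl)
  map_mul' a b := Subtype.ext (by
    show (a * b, constX B (u (a * b))) = (a, constX B (u a)) * (b, constX B (u b))
    rw [map_mul, map_mul]; rfl)

/-- The map `p : A' → B`, `(a, f(x)) ↦ f(1)`. -/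
def pbP {A B : Type} [NonUnitalRing A] [NonUnitalRing B] (u : A →ₙ+* B) :
    ↥(pbSub u) →ₙ+* B :=
  (ev1 B).comp ((NonUnitalRingHom.snd A (NPX B)).comp (NonUnitalSubringClass.subtype (pbSub u)))

/-- Elementary homotopy equivalences. -/
def ElemHomotopyEquiv {S R : Type} [NonUnitalRing S] [NonUnitalRing R] (f : S →ₙ+* R) : Prop :=
  ∃ g : R →ₙ+* S, ElemHomotopic (f.comp g) (NonUnitalRingHom.id R) ∧
    ElemHomotopic (g.comp f) (NonUnitalRingHom.id S)

section MyHelpers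

variable {R S : Type} [NonUnitalRing R] [NonUnitalRing S]

/-- snd as an additive monoid hom. -/
def sndAdd (R : Type) [NonUnitalRing R] : URing R →+ R where
  toFun x := x.snd
  map_zero' := rfl
  map_add' _ _ := rfl

theorem inr_snd_eq {x : URing R} (h : x.fst = 0) : ((x.snd : R) : URing R) = x := by
  apply Unitization.ext
  · rw [Unitization.fst_inr, h]
  · rw [Unitization.snd_inr]

theorem snd_mul'' {x y : URing R} (hx : x.fst = 0) (hy : y.fst = 0) :
    (x * y).snd = x.snd * y.snd := by
  rw [Unitization.snd_mul, hx, hy, zero_smul, zero_smul, zero_add, zero_add]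

theorem uMap_snd (f : R →ₙ+* S) (x : URing R) : (uMap f x).snd = f x.snd := by
  show (Unitization.inl x.fst + ((f x.snd : S) : URing S)).snd = _
  simp

theorem uMap_inr (f : R →ₙ+* S) (r : R) :
    uMap f ((r : R) : URing R) = ((f r : S) : URing S) := by
  apply Unitization.ext
  · rw [uMap_fst]; simp
  · rw [uMap_snd]; simp

theorem uMap_injective (f : R →ₙ+* S) (hf : Function.Injective f) :
    Function.Injective (uMap f) := by
  intro x y h
  apply Unitization.ext
  · rw [← uMap_fst f x, ← uMap_fst f y, h]
  · exact hf (by rw [← uMap_snd f x, ← uMap_snd f y, h])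

theorem MAmap_injective {G : Type} [AddCommMonoid G] (f : R →ₙ+* S)
    (hf : Function.Injective f) : Function.Injective (MAmap (G := G) f) := by
  intro p q h
  refine AddMonoidAlgebra.ext (Finsupp.ext fun a => ?_)
  have h' : (MAmap f p).coeff a = (MAmap f q).coeff a := by rw [h]
  rw [MAmap_apply, MAmap_apply] at h'
  exact uMap_injective f hf h'

theorem mono_zero {G : Type} [AddCommMonoid G] (a : G) : mono (R := R) a 0 = 0 := by
  apply Subtype.ext
  show AddMonoidAlgebra.single a (((0 : R) : URing R)) = 0
  rw [Unitization.inr_zero, AddMonoidAlgebra.single_zero]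

theorem mono_add {G : Type} [AddCommMonoid G] (a : G) (r s : R) :
    mono a (r + s) = mono a r + mono a s := by
  apply Subtype.ext
  show AddMonoidAlgebra.single a (((r + s : R) : URing R)) = _
  rw [Unitization.inr_add, AddMonoidAlgebra.single_add]
  rfl

theorem mono_mul {G : Type} [AddCommMonoid G] (a b : G) (r s : R) :
    mono a r * mono b s = mono (a + b) (r * s) := by
  apply Subtype.ext
  show (AddMonoidAlgebra.single a ((r : R) : URing R)) * AddMonoidAlgebra.single b ((s : R) : URing R)
    = AddMonoidAlgebra.single (a + b) (((r * s : R) : URing R))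
  rw [AddMonoidAlgebra.single_mul_single, Unitization.inr_mul]

theorem ev0U_apply (p : MA R ℕ) : ev0U R ℕ hGnat p = p.coeff 0 := by
  rw [liftNC_eq_sum, Finsupp.sum]
  rw [Finset.sum_congr rfl (fun a _ => show (RingHom.id (URing R)) (p.coeff a)
      * (gZero R ℕ hGnat) (Multiplicative.ofAdd a) = if a = 0 then p.coeff a else 0 from ?_)]
  · rw [Finset.sum_ite_eq' p.coeff.support 0 (fun a => p.coeff a)]
    split
    · rfl
    · exact (Finsupp.notMem_support_iff.mp (by assumption)).symm
  · by_cases h : a = 0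
    · rw [show (gZero R ℕ hGnat) (Multiplicative.ofAdd a) = 1 from if_pos h, mul_one, if_pos h]
      rfl
    · rw [show (gZero R ℕ hGnat) (Multiplicative.ofAdd a) = 0 from if_neg h, mul_zero, if_neg h]

theorem ev0_eq (p : NPX R) : ev0 R p = ((p : MA R ℕ).coeff 0).snd := by
  show ((ev0U R ℕ hGnat) ↑p).snd = _
  rw [ev0U_apply]

theorem ev1_eq (p : NPX R) (S : Finset ℕ) (hS : (p : MA R ℕ).coeff.support ⊆ S) :
    ev1 R p = ∑ a ∈ S, ((p : MA R ℕ).coeff a).snd := by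
  show ((ev1U R ℕ) ↑p).snd = _
  rw [liftNC_eq_sum, Finsupp.sum]
  rw [Finset.sum_congr rfl (fun a _ => show (RingHom.id (URing R)) ((p : MA R ℕ).coeff a)
      * (1 : Multiplicative ℕ →* URing R) (Multiplicative.ofAdd a) = (p : MA R ℕ).coeff a from by
    rw [MonoidHom.one_apply, mul_one]; rfl)]
  rw [Finset.sum_subset hS (fun x _ hx => Finsupp.notMem_support_iff.mp hx)]
  exact map_sum (sndAdd R) _ _

end MyHelpers

section PhiFun

variable {R₁ R₂ S : Type} [NonUnitalRing R₁] [NonUnitalRing R₂] [NonUnitalRing S]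
variable {G : Type} [AddCommMonoid G]

/-- Generic coefficientwise combination of two polynomials. -/
def phiFun (c : G → URing R₁ → URing R₂ → URing S) (h0 : ∀ a, c a 0 0 = 0)
    (p : MA R₁ G) (q : MA R₂ G) : MA S G :=
  .ofCoeff <| Finsupp.onFinset (p.coeff.support ∪ q.coeff.support) (fun a => c a (p.coeff a) (q.coeff a)) (fun a ha => by
    by_contra hC
    rw [Finset.mem_union, not_or] at hC
    refine ha ?_
    show c a (p.coeff a) (q.coeff a) = 0
    rw [Finsupp.notMem_support_iff.mp hC.1, Finsupp.notMem_support_iff.mp hC.2, h0])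

theorem phiFun_apply (c : G → URing R₁ → URing R₂ → URing S) (h0 : ∀ a, c a 0 0 = 0)
    (p : MA R₁ G) (q : MA R₂ G) (a : G) : (phiFun c h0 p q).coeff a = c a (p.coeff a) (q.coeff a) := rfl

theorem phiFun_add (c : G → URing R₁ → URing R₂ → URing S) (h0 : ∀ a, c a 0 0 = 0)
    (hadd : ∀ a x x' y y', c a (x + x') (y + y') = c a x y + c a x' y')
    (p p' : MA R₁ G) (q q' : MA R₂ G) :
    phiFun c h0 (p + p') (q + q') = phiFun c h0 p q + phiFun c h0 p' q' :=
  AddMonoidAlgebra.ext <| Finsupp.ext fun a => by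
    rw [AddMonoidAlgebra.coeff_add, Finsupp.add_apply, phiFun_apply, phiFun_apply, phiFun_apply, AddMonoidAlgebra.coeff_add, Finsupp.add_apply,
      AddMonoidAlgebra.coeff_add, Finsupp.add_apply, hadd]

theorem phiFun_zero (c : G → URing R₁ → URing R₂ → URing S) (h0 : ∀ a, c a 0 0 = 0) :
    phiFun c h0 0 0 = 0 :=
  AddMonoidAlgebra.ext <| Finsupp.ext fun a => by rw [phiFun_apply]; exact h0 a

theorem c_sum {ι : Type} (c : G → URing R₁ → URing R₂ → URing S) (h0 : ∀ a, c a 0 0 = 0)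
    (hadd : ∀ a x x' y y', c a (x + x') (y + y') = c a x y + c a x' y')
    (a : G) (s : Finset ι) (X : ι → URing R₁) (Y : ι → URing R₂) :
    c a (∑ i ∈ s, X i) (∑ i ∈ s, Y i) = ∑ i ∈ s, c a (X i) (Y i) := by
  classical
  induction s using Finset.induction with
  | empty => simpa using h0 a
  | insert _ _ h ih =>
    rw [Finset.sum_insert h, Finset.sum_insert h, Finset.sum_insert h, hadd, ih]

theorem phiFun_mul (c : G → URing R₁ → URing R₂ → URing S) (h0 : ∀ a, c a 0 0 = 0)
    (hadd : ∀ a x x' y y', c a (x + x') (y + y') = c a x y + c a x' y')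
    (hmul : ∀ (a b : G) (x x' : URing R₁) (y y' : URing R₂), x.fst = 0 → x'.fst = 0 →
      y.fst = 0 → y'.fst = 0 → c a x y * c b x' y' = c (a + b) (x * x') (y * y'))
    (p p' : MA R₁ G) (q q' : MA R₂ G)
    (hp : ∀ a, (p.coeff a).fst = 0) (hp' : ∀ a, (p'.coeff a).fst = 0)
    (hq : ∀ a, (q.coeff a).fst = 0) (hq' : ∀ a, (q'.coeff a).fst = 0) :
    phiFun c h0 (p * p') (q * q') = phiFun c h0 p q * phiFun c h0 p' q' := by
  classical
  refine AddMonoidAlgebra.ext (Finsupp.ext fun a => ?_)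
  set T := p.coeff.support ∪ q.coeff.support with hT
  set T' := p'.coeff.support ∪ q'.coeff.support with hT'
  have key : ∀ {α : Type} [NonUnitalRing α] (r r' : MA α G),
      r.coeff.support ⊆ T → r'.coeff.support ⊆ T' →
      (r * r').coeff a = ∑ b ∈ T, ∑ b' ∈ T', if b + b' = a then r.coeff b * r'.coeff b' else 0 := by
    intro α _ r r' h1 h2
    rw [AddMonoidAlgebra.mul_apply, Finsupp.sum]
    rw [Finset.sum_subset h1 (fun b _ hb => by
      rw [Finsupp.sum, Finsupp.notMem_support_iff.mp hb]
      exact Finset.sum_eq_zero fun b' _ => by split <;> simp)]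
    refine Finset.sum_congr rfl fun b _ => ?_
    rw [Finsupp.sum]
    exact Finset.sum_subset h2 (fun b' _ hb' => by
      rw [Finsupp.notMem_support_iff.mp hb']
      split <;> simp)
  have hsub1 : (phiFun c h0 p q).coeff.support ⊆ T := fun x hx => by
    by_contra hC
    rw [hT, Finset.mem_union, not_or] at hC
    exact (Finsupp.mem_support_iff.mp hx) (by
      rw [phiFun_apply, Finsupp.notMem_support_iff.mp hC.1, Finsupp.notMem_support_iff.mp hC.2, h0])
  have hsub2 : (phiFun c h0 p' q').coeff.support ⊆ T' := fun x hx => by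
    by_contra hC
    rw [hT', Finset.mem_union, not_or] at hC
    exact (Finsupp.mem_support_iff.mp hx) (by
      rw [phiFun_apply, Finsupp.notMem_support_iff.mp hC.1, Finsupp.notMem_support_iff.mp hC.2, h0])
  rw [key (phiFun c h0 p q) (phiFun c h0 p' q') hsub1 hsub2]
  rw [phiFun_apply,
    key p p' Finset.subset_union_left (by rw [hT']; exact Finset.subset_union_left),
    key q q' Finset.subset_union_right (by rw [hT']; exact Finset.subset_union_right),
    c_sum c h0 hadd]
  refine Finset.sum_congr rfl fun b _ => ?_
  rw [c_sum c h0 hadd]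
  refine Finset.sum_congr rfl fun b' _ => ?_
  rw [phiFun_apply, phiFun_apply]
  split
  · rename_i hC
    rw [hmul b b' _ _ _ _ (hp b) (hp' b') (hq b) (hq' b'), hC]
  · exact h0 a

end PhiFun

section Part3

theorem elemHomotopic_refl {S R : Type} [NonUnitalRing S] [NonUnitalRing R] (f : S →ₙ+* R) :
    ElemHomotopic f f :=
  ⟨(constX R).comp f, NonUnitalRingHom.ext fun s => ev0_constX (f s),
    NonUnitalRingHom.ext fun s => ev1_constX (f s)⟩

theorem fst_single_inr {A G : Type} [NonUnitalRing A] [AddCommMonoid G] (a : A) (b k : G) :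
    ((AddMonoidAlgebra.single b ((a : A) : URing A) : MA A G).coeff k).fst = 0 := by
  rw [AddMonoidAlgebra.coeff_single, Finsupp.single_apply]
  split <;> simp

variable {A B : Type} [NonUnitalRing A] [NonUnitalRing B] (u : A →ₙ+* B)

/-- The first projection `A' → A`. -/
def pbPr1 : ↥(pbSub u) →ₙ+* A :=
  (NonUnitalRingHom.fst A (NPX B)).comp (NonUnitalSubringClass.subtype (pbSub u))

/-- The coefficient combination map for the homotopy `H`. -/
def cH (A B : Type) [NonUnitalRing A] [NonUnitalRing B] :
    ℕ → URing A → URing B → URing (A × NPX B) :=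
  fun k x y => (((x.snd, mono k y.snd) : A × NPX B) : URing (A × NPX B))

theorem cH_zero : ∀ k, cH A B k 0 0 = 0 := fun k => by
  show (((((0 : URing A).snd, mono k (0 : URing B).snd) : A × NPX B)) : URing (A × NPX B)) = 0
  rw [Unitization.snd_zero, Unitization.snd_zero, mono_zero]
  exact Unitization.inr_zero ℤ

theorem cH_add : ∀ (k : ℕ) (x x' : URing A) (y y' : URing B),
    cH A B k (x + x') (y + y') = cH A B k x y + cH A B k x' y' := fun k x x' y y' => by
  show ((((x + x').snd, mono k (y + y').snd) : A × NPX B) : URing (A × NPX B))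
    = (((x.snd, mono k y.snd) : A × NPX B) : URing (A × NPX B))
      + (((x'.snd, mono k y'.snd) : A × NPX B) : URing (A × NPX B))
  rw [← Unitization.inr_add, Unitization.snd_add, Unitization.snd_add, mono_add, Prod.mk_add_mk]

theorem cH_mul : ∀ (k k' : ℕ) (x x' : URing A) (y y' : URing B), x.fst = 0 → x'.fst = 0 →
    y.fst = 0 → y'.fst = 0 → cH A B k x y * cH A B k' x' y' = cH A B (k + k') (x * x') (y * y') :=
  fun k k' x x' y y' hx hx' hy hy' => by
  show (((x.snd, mono k y.snd) : A × NPX B) : URing (A × NPX B))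
      * (((x'.snd, mono k' y'.snd) : A × NPX B) : URing (A × NPX B))
    = ((((x * x').snd, mono (k + k') ((y * y').snd)) : A × NPX B) : URing (A × NPX B))
  rw [← Unitization.inr_mul, snd_mul'' hx hx', snd_mul'' hy hy', ← mono_mul]
  rfl

theorem Hmem (z : ↥(pbSub u)) (k : ℕ) :
    ((if k = 0 then z.1.1 else 0, mono k (((z.1.2 : NPX B) : MA B ℕ).coeff k).snd) : A × NPX B)
      ∈ pbSub u := by
  have hz : u z.1.1 = ev0 B z.1.2 := z.2
  show u (if k = 0 then z.1.1 else 0) = ev0 B (mono k (((z.1.2 : NPX B) : MA B ℕ).coeff k).snd)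
  rw [ev0_mono]
  by_cases h : k = 0
  · rw [if_pos h, if_pos h, hz, ev0_eq, h]
  · rw [if_neg h, if_neg h, map_zero]

theorem Hfun_supp (z : ↥(pbSub u)) (k : ℕ)
    (hk : ((⟨(if k = 0 then z.1.1 else 0, mono k (((z.1.2 : NPX B) : MA B ℕ).coeff k).snd),
      Hmem u z k⟩ : ↥(pbSub u)) : URing ↥(pbSub u)) ≠ 0) :
    k ∈ insert 0 ((z.1.2 : MA B ℕ).coeff.support) := by
  by_contra hC
  rw [Finset.mem_insert, not_or] at hC
  have h2 : ((z.1.2 : MA B ℕ)).coeff k = 0 := Finsupp.notMem_support_iff.mp hC.2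
  have h3 : (⟨(if k = 0 then z.1.1 else 0, mono k (((z.1.2 : NPX B) : MA B ℕ).coeff k).snd), Hmem u z k⟩
      : ↥(pbSub u)) = 0 := by
    apply Subtype.ext
    show (if k = 0 then z.1.1 else 0, mono k (((z.1.2 : NPX B) : MA B ℕ).coeff k).snd)
      = ((0 : A), (0 : NPX B))
    rw [if_neg hC.1, h2, Unitization.snd_zero, mono_zero]
  refine hk ?_
  rw [h3]
  exact Unitization.inr_zero ℤ

/-- The underlying function of the elementary homotopy `H : A' → A'[x]`. -/
def Hfun (z : ↥(pbSub u)) : MA ↥(pbSub u) ℕ :=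
  .ofCoeff <| Finsupp.onFinset (insert 0 ((z.1.2 : MA B ℕ).coeff.support))
    (fun k => ((⟨_, Hmem u z k⟩ : ↥(pbSub u)) : URing ↥(pbSub u)))
    (fun k hk => Hfun_supp u z k hk)

theorem iota_Hfun (z : ↥(pbSub u)) :
    MAmap (NonUnitalSubringClass.subtype (pbSub u)) (Hfun u z)
      = phiFun (cH A B) cH_zero
          (AddMonoidAlgebra.single 0 ((z.1.1 : A) : URing A)) ↑z.1.2 := by
  refine AddMonoidAlgebra.ext (Finsupp.ext fun k => ?_)
  rw [MAmap_apply, phiFun_apply]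
  show uMap (NonUnitalSubringClass.subtype (pbSub u))
      ((⟨_, Hmem u z k⟩ : ↥(pbSub u)) : URing ↥(pbSub u)) = _
  rw [uMap_inr]
  show (((if k = 0 then z.1.1 else 0, mono k (((z.1.2 : NPX B) : MA B ℕ).coeff k).snd) : A × NPX B)
      : URing (A × NPX B))
    = ((((AddMonoidAlgebra.single 0 ((z.1.1 : A) : URing A) : MA A ℕ).coeff k).snd,
        mono k (((z.1.2 : NPX B) : MA B ℕ).coeff k).snd) : A × NPX B)
  have hs : ((AddMonoidAlgebra.single 0 ((z.1.1 : A) : URing A) : MA A ℕ).coeff k).snd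
      = if k = 0 then z.1.1 else 0 := by
    rw [AddMonoidAlgebra.coeff_single, Finsupp.single_apply]
    by_cases h : k = 0
    · rw [if_pos h, if_pos h.symm, Unitization.snd_inr]
    · rw [if_neg h, if_neg (fun hh => h hh.symm), Unitization.snd_zero]
  rw [hs]

/-- The elementary homotopy `H : A' → A'[x]` as a ring homomorphism. -/
def Hhom : ↥(pbSub u) →ₙ+* NPX ↥(pbSub u) where
  toFun z := ⟨Hfun u z, fun k => Unitization.fst_inr _ _⟩
  map_zero' := by
    apply Subtype.ext
    apply MAmap_injective (NonUnitalSubringClass.subtype (pbSub u)) Subtype.val_injective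
    rw [show ((⟨Hfun u 0, fun k => Unitization.fst_inr _ _⟩ : NPX ↥(pbSub u)) : MA ↥(pbSub u) ℕ)
      = Hfun u 0 from rfl, iota_Hfun]
    show phiFun (cH A B) cH_zero (AddMonoidAlgebra.single 0 (((0 : A) : URing A))) ↑(0 : NPX B)
      = MAmap _ ((0 : NPX ↥(pbSub u)) : MA ↥(pbSub u) ℕ)
    rw [Unitization.inr_zero, AddMonoidAlgebra.single_zero]
    show phiFun (cH A B) cH_zero 0 0 = MAmap _ 0
    rw [phiFun_zero, map_zero]
  map_add' z w := by
    apply Subtype.ext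
    apply MAmap_injective (NonUnitalSubringClass.subtype (pbSub u)) Subtype.val_injective
    show MAmap _ (Hfun u (z + w)) = MAmap _ (Hfun u z + Hfun u w)
    rw [map_add, iota_Hfun, iota_Hfun, iota_Hfun,
      ← phiFun_add (cH A B) cH_zero cH_add]
    congr 1
    · show AddMonoidAlgebra.single 0 (((z.1.1 + w.1.1 : A) : URing A)) = _
      rw [Unitization.inr_add, AddMonoidAlgebra.single_add]
  map_mul' z w := by
    apply Subtype.ext
    apply MAmap_injective (NonUnitalSubringClass.subtype (pbSub u)) Subtype.val_injective
    show MAmap _ (Hfun u (z * w)) = MAmap _ (Hfun u z * Hfun u w)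
    rw [map_mul, iota_Hfun, iota_Hfun, iota_Hfun,
      ← phiFun_mul (cH A B) cH_zero cH_add cH_mul _ _ _ _
        (fun a => fst_single_inr z.1.1 0 a) (fun a => fst_single_inr w.1.1 0 a)
        (fun a => z.1.2.2 a) (fun a => w.1.2.2 a)]
    congr 1
    · show AddMonoidAlgebra.single 0 (((z.1.1 * w.1.1 : A) : URing A)) = _
      rw [Unitization.inr_mul, AddMonoidAlgebra.single_mul_single, zero_add]

theorem ev0_Hhom (z : ↥(pbSub u)) : ev0 ↥(pbSub u) (Hhom u z) = (pbI u) ((pbPr1 u) z) := by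
  rw [ev0_eq]
  show ((Hfun u z).coeff 0).snd = _
  show (⟨(if (0:ℕ) = 0 then z.1.1 else 0, mono 0 (((z.1.2 : NPX B) : MA B ℕ).coeff 0).snd), _⟩
      : ↥(pbSub u)) = _
  apply Subtype.ext
  show (if (0:ℕ) = 0 then z.1.1 else 0, mono 0 (((z.1.2 : NPX B) : MA B ℕ).coeff 0).snd)
    = (z.1.1, constX B (u z.1.1))
  rw [if_pos rfl, constX_eq_mono,
    show u z.1.1 = ev0 B z.1.2 from z.2, ev0_eq]

theorem ev1_Hhom (z : ↥(pbSub u)) : ev1 ↥(pbSub u) (Hhom u z) = z := by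
  have hsub : ((Hhom u z : NPX ↥(pbSub u)) : MA ↥(pbSub u) ℕ).coeff.support
      ⊆ insert 0 ((z.1.2 : MA B ℕ).coeff.support) := by
    intro k hk
    exact Hfun_supp u z k (Finsupp.mem_support_iff.mp hk)
  rw [ev1_eq (Hhom u z) (insert 0 ((z.1.2 : MA B ℕ).coeff.support)) hsub]
  show (∑ k ∈ insert 0 ((z.1.2 : MA B ℕ).coeff.support), ((Hfun u z).coeff k).snd) = z
  have hcoe : ∀ k, ((Hfun u z).coeff k).snd
      = (⟨(if k = 0 then z.1.1 else 0, mono k (((z.1.2 : NPX B) : MA B ℕ).coeff k).snd), Hmem u z k⟩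
        : ↥(pbSub u)) := fun k => rfl
  rw [Finset.sum_congr rfl fun k _ => hcoe k]
  apply Subtype.ext
  rw [AddSubmonoidClass.coe_finset_sum]
  show (∑ k ∈ insert 0 ((z.1.2 : MA B ℕ).coeff.support),
      ((if k = 0 then z.1.1 else 0, mono k (((z.1.2 : NPX B) : MA B ℕ).coeff k).snd) : A × NPX B))
    = (z.1.1, z.1.2)
  rw [Prod.ext_iff]
  constructor
  · rw [Prod.fst_sum, Finset.sum_ite_eq' _ 0 (fun _ => z.1.1),
      if_pos (Finset.mem_insert_self 0 _)]
  · rw [Prod.snd_sum]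
    apply Subtype.ext
    rw [AddSubmonoidClass.coe_finset_sum]
    refine AddMonoidAlgebra.ext (Finsupp.ext fun a => ?_)
    rw [show ((∑ k ∈ insert 0 ((z.1.2 : MA B ℕ).coeff.support),
        ((mono k (((z.1.2 : NPX B) : MA B ℕ).coeff k).snd : NPX B) : MA B ℕ)).coeff a)
      = ∑ k ∈ insert 0 ((z.1.2 : MA B ℕ).coeff.support),
        (((mono k (((z.1.2 : NPX B) : MA B ℕ).coeff k).snd : NPX B) : MA B ℕ).coeff a)
      from by rw [AddMonoidAlgebra.coeff_sum, Finset.sum_apply']]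
    rw [Finset.sum_congr rfl (fun k _ => show
        (((mono k (((z.1.2 : NPX B) : MA B ℕ).coeff k).snd : NPX B) : MA B ℕ).coeff a)
          = if k = a then ((z.1.2 : NPX B) : MA B ℕ).coeff k else 0 from by
      rw [show ((mono k (((z.1.2 : NPX B) : MA B ℕ).coeff k).snd : NPX B) : MA B ℕ)
          = AddMonoidAlgebra.single k ((((((z.1.2 : NPX B) : MA B ℕ).coeff k).snd : B)) : URing B)
        from rfl, AddMonoidAlgebra.coeff_single, Finsupp.single_apply, inr_snd_eq (z.1.2.2 k)])]
    rw [Finset.sum_ite_eq' _ a (fun k => ((z.1.2 : NPX B) : MA B ℕ).coeff k)]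
    split
    · rfl
    · rename_i h
      rw [Finset.mem_insert, not_or] at h
      exact (Finsupp.notMem_support_iff.mp h.2).symm

theorem part3 (u : A →ₙ+* B) : ElemHomotopyEquiv (pbI u) := by
  refine ⟨pbPr1 u, ⟨Hhom u, ?_, ?_⟩, ?_⟩
  · exact NonUnitalRingHom.ext fun z => ev0_Hhom u z
  · exact NonUnitalRingHom.ext fun z => ev1_Hhom u z
  · have h : (pbPr1 u).comp (pbI u) = NonUnitalRingHom.id A :=
      NonUnitalRingHom.ext fun a => rfl
    rw [h]
    exact elemHomotopic_refl _

theorem part1 (u : A →ₙ+* B) : (pbP u).comp (pbI u) = u :=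
  NonUnitalRingHom.ext fun a => ev1_constX (u a)

end Part3

section Part2

/-- The zero homomorphism. -/
def zeroNRH (X Y : Type) [NonUnitalRing X] [NonUnitalRing Y] : X →ₙ+* Y where
  toFun _ := 0
  map_zero' := rfl
  map_add' _ _ := (add_zero 0).symm
  map_mul' _ _ := (mul_zero 0).symm

variable {A B : Type} [NonUnitalRing A] [NonUnitalRing B] (u : A →ₙ+* B)

theorem pbP_surjective : Function.Surjective (pbP u) := by
  intro b
  refine ⟨⟨(0, mono 1 b), ?_⟩, ?_⟩
  · show u 0 = ev0 B (mono 1 b)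
    rw [map_zero, ev0_mono, if_neg one_ne_zero]
  · show ev1 B (mono 1 b) = b
    exact ev1_mono 1 b

/-- Coefficient map for the section-like map `λ : EⁿB → Eⁿ(B[x])`. -/
def cL (B : Type) [NonUnitalRing B] (n : ℕ) (hn : 0 < n) :
    (Fin n →₀ ℕ) → URing B → URing B → URing (NPX B) :=
  fun a _ y => ((mono (a ⟨0, hn⟩) y.snd : NPX B) : URing (NPX B))

theorem cL_zero (n : ℕ) (hn : 0 < n) : ∀ a, cL B n hn a 0 0 = 0 := fun a => by
  show ((mono (a ⟨0, hn⟩) ((0 : URing B)).snd : NPX B) : URing (NPX B)) = 0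
  rw [Unitization.snd_zero, mono_zero]
  exact Unitization.inr_zero ℤ

theorem cL_add (n : ℕ) (hn : 0 < n) : ∀ (a : Fin n →₀ ℕ) (x x' y y' : URing B),
    cL B n hn a (x + x') (y + y') = cL B n hn a x y + cL B n hn a x' y' :=
  fun a x x' y y' => by
  show ((mono (a ⟨0, hn⟩) ((y + y' : URing B)).snd : NPX B) : URing (NPX B))
    = ((mono (a ⟨0, hn⟩) (y : URing B).snd : NPX B) : URing (NPX B))
      + ((mono (a ⟨0, hn⟩) (y' : URing B).snd : NPX B) : URing (NPX B))
  rw [← Unitization.inr_add, Unitization.snd_add, mono_add]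

theorem cL_mul (n : ℕ) (hn : 0 < n) : ∀ (a b : Fin n →₀ ℕ) (x x' : URing B) (y y' : URing B),
    x.fst = 0 → x'.fst = 0 → y.fst = 0 → y'.fst = 0 →
    cL B n hn a x y * cL B n hn b x' y' = cL B n hn (a + b) (x * x') (y * y') :=
  fun a b x x' y y' _ _ hy hy' => by
  show ((mono (a ⟨0, hn⟩) (y : URing B).snd : NPX B) : URing (NPX B))
      * ((mono (b ⟨0, hn⟩) (y' : URing B).snd : NPX B) : URing (NPX B))
    = ((mono ((a + b) ⟨0, hn⟩) ((y * y' : URing B)).snd : NPX B) : URing (NPX B))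
  rw [← Unitization.inr_mul, mono_mul, snd_mul'' hy hy', Finsupp.add_apply]

/-- The map `λ : EⁿB → Eⁿ(B[x])` sending `q(x₁,…,xₙ)` to `q` with each coefficient
multiplied by `x` to the power of the exponent of `x₁`, i.e. `q(x·x₁, x₂, …, xₙ)`. -/
def lamHom (B : Type) [NonUnitalRing B] (n : ℕ) (hn : 0 < n) :
    ↥(EnSub B n) →ₙ+* ↥(EnSub (NPX B) n) where
  toFun q := ⟨phiFun (cL B n hn) (cL_zero n hn) ↑q ↑q, by
    refine ⟨fun a => ?_, fun a ha => ?_⟩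
    · rw [phiFun_apply]
      exact Unitization.fst_inr _ _
    · rw [phiFun_apply, q.2.2 a ha]
      exact cL_zero n hn a⟩
  map_zero' := Subtype.ext (by
    show phiFun (cL B n hn) (cL_zero n hn) ↑(0 : ↥(EnSub B n)) ↑(0 : ↥(EnSub B n)) = 0
    exact phiFun_zero _ _)
  map_add' q r := Subtype.ext (by
    show phiFun (cL B n hn) (cL_zero n hn) (↑q + ↑r) (↑q + ↑r) = _
    rw [phiFun_add (cL B n hn) (cL_zero n hn) (cL_add n hn)]
    rfl)
  map_mul' q r := Subtype.ext (by
    show phiFun (cL B n hn) (cL_zero n hn) (↑q * ↑r) (↑q * ↑r) = _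
    rw [phiFun_mul (cL B n hn) (cL_zero n hn) (cL_add n hn) (cL_mul n hn) _ _ _ _
      q.2.1 r.2.1 q.2.1 r.2.1]
    rfl)

theorem lam_ev1 (n : ℕ) (hn : 0 < n) :
    (EnMap (ev1 B) n).comp (lamHom B n hn) = NonUnitalRingHom.id ↥(EnSub B n) := by
  refine NonUnitalRingHom.ext fun q => ?_
  apply Subtype.ext
  refine AddMonoidAlgebra.ext (Finsupp.ext fun a => ?_)
  show (MAmap (ev1 B) (phiFun (cL B n hn) (cL_zero n hn) ↑q ↑q)).coeff a = (q : MA B _).coeff a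
  rw [MAmap_apply, phiFun_apply]
  show uMap (ev1 B) ((mono (a ⟨0, hn⟩) (((q : MA B _).coeff a)).snd : NPX B) : URing (NPX B)) = _
  rw [uMap_inr, ev1_mono]
  exact inr_snd_eq (q.2.1 a)

theorem lam_ev0 (n : ℕ) (hn : 0 < n) :
    (EnMap u n).comp (zeroNRH ↥(EnSub B n) ↥(EnSub A n))
      = (EnMap (ev0 B) n).comp (lamHom B n hn) := by
  refine NonUnitalRingHom.ext fun q => ?_
  apply Subtype.ext
  refine AddMonoidAlgebra.ext (Finsupp.ext fun a => ?_)
  have hL : (((EnMap u n).comp (zeroNRH ↥(EnSub B n) ↥(EnSub A n))) q) = 0 := by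
    show (EnMap u n) ((zeroNRH ↥(EnSub B n) ↥(EnSub A n)) q) = 0
    show (EnMap u n) 0 = 0
    exact map_zero _
  rw [hL]
  show (0 : URing B) = (MAmap (ev0 B) (phiFun (cL B n hn) (cL_zero n hn) ↑q ↑q)).coeff a
  rw [MAmap_apply, phiFun_apply]
  show (0 : URing B)
    = uMap (ev0 B) ((mono (a ⟨0, hn⟩) (((q : MA B _).coeff a)).snd : NPX B) : URing (NPX B))
  rw [uMap_inr, ev0_mono]
  by_cases h : a ⟨0, hn⟩ = 0
  · rw [if_pos h, q.2.2 a ⟨⟨0, hn⟩, h⟩, Unitization.snd_zero]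
    exact (Unitization.inr_zero ℤ).symm
  · rw [if_neg h]
    exact (Unitization.inr_zero ℤ).symm

variable (n : ℕ)

set_option maxHeartbeats 4000000 in
theorem psiMem (z : ↥(pb2Sub (EnMap u n) (EnMap (ev0 B) n))) (a : Fin n →₀ ℕ) :
    ((((z.1.1 : MA A (Fin n →₀ ℕ)).coeff a).snd, (((z.1.2 : MA (NPX B) (Fin n →₀ ℕ)).coeff a).snd : NPX B))
      : A × NPX B) ∈ pbSub u := by
  show u (((z.1.1 : MA A (Fin n →₀ ℕ)).coeff a).snd) = ev0 B (((z.1.2 : MA (NPX B) (Fin n →₀ ℕ)).coeff a).snd)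
  have h0 : (EnMap u n) z.1.1 = (EnMap (ev0 B) n) z.1.2 := z.2
  have h2 : MAmap u ((z.1.1 : ↥(EnSub A n)) : MA A (Fin n →₀ ℕ))
      = MAmap (ev0 B) ((z.1.2 : ↥(EnSub (NPX B) n)) : MA (NPX B) (Fin n →₀ ℕ)) :=
    congrArg Subtype.val h0
  have h3 : (MAmap u (↑z.1.1 : MA A (Fin n →₀ ℕ))).coeff a
      = (MAmap (ev0 B) (↑z.1.2 : MA (NPX B) (Fin n →₀ ℕ))).coeff a := by rw [h2]
  rw [MAmap_apply, MAmap_apply] at h3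
  have h4 := congrArg Prod.snd (congrArg Unitization.toProd h3)
  rw [uMap_snd, uMap_snd] at h4
  exact h4

/-- Coefficient map for `ψ`. -/
def cPsi (A B : Type) [NonUnitalRing A] [NonUnitalRing B] (n : ℕ) :
    (Fin n →₀ ℕ) → URing A → URing (NPX B) → URing (A × NPX B) :=
  fun _ x y => (((x.snd, y.snd) : A × NPX B) : URing (A × NPX B))

theorem cPsi_zero : ∀ a, cPsi A B n a 0 0 = 0 := fun a => by
  show ((((0 : URing A).snd, (0 : URing (NPX B)).snd) : A × NPX B) : URing (A × NPX B)) = 0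
  rw [Unitization.snd_zero, Unitization.snd_zero]
  exact Unitization.inr_zero ℤ

theorem cPsi_add : ∀ (a : Fin n →₀ ℕ) (x x' : URing A) (y y' : URing (NPX B)),
    cPsi A B n a (x + x') (y + y') = cPsi A B n a x y + cPsi A B n a x' y' :=
  fun a x x' y y' => by
  show ((((x + x').snd, (y + y').snd) : A × NPX B) : URing (A × NPX B))
    = (((x.snd, y.snd) : A × NPX B) : URing (A × NPX B))
      + (((x'.snd, y'.snd) : A × NPX B) : URing (A × NPX B))
  rw [← Unitization.inr_add, Unitization.snd_add, Unitization.snd_add, Prod.mk_add_mk]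

theorem cPsi_mul : ∀ (a b : Fin n →₀ ℕ) (x x' : URing A) (y y' : URing (NPX B)),
    x.fst = 0 → x'.fst = 0 → y.fst = 0 → y'.fst = 0 →
    cPsi A B n a x y * cPsi A B n b x' y' = cPsi A B n (a + b) (x * x') (y * y') :=
  fun a b x x' y y' hx hx' hy hy' => by
  show (((x.snd, y.snd) : A × NPX B) : URing (A × NPX B))
      * (((x'.snd, y'.snd) : A × NPX B) : URing (A × NPX B))
    = ((((x * x').snd, (y * y').snd) : A × NPX B) : URing (A × NPX B))
  rw [← Unitization.inr_mul, snd_mul'' hx hx', snd_mul'' hy hy']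
  rfl

/-- The underlying function of `ψ : EⁿA ×_{EⁿB} Eⁿ(B[x]) → Eⁿ(A')`. -/
def psiFun (z : ↥(pb2Sub (EnMap u n) (EnMap (ev0 B) n))) : MA ↥(pbSub u) (Fin n →₀ ℕ) :=
  .ofCoeff <| Finsupp.onFinset ((z.1.1 : MA A (Fin n →₀ ℕ)).coeff.support ∪ (z.1.2 : MA (NPX B) (Fin n →₀ ℕ)).coeff.support)
    (fun a => ((⟨_, psiMem u n z a⟩ : ↥(pbSub u)) : URing ↥(pbSub u)))
    (fun a ha => by
      by_contra hC
      rw [Finset.mem_union, not_or] at hC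
      have h1 : (z.1.1 : MA A (Fin n →₀ ℕ)).coeff a = 0 := Finsupp.notMem_support_iff.mp hC.1
      have h2 : (z.1.2 : MA (NPX B) (Fin n →₀ ℕ)).coeff a = 0 := Finsupp.notMem_support_iff.mp hC.2
      have h3 : (⟨(((z.1.1 : MA A (Fin n →₀ ℕ)).coeff a).snd,
          (((z.1.2 : MA (NPX B) (Fin n →₀ ℕ)).coeff a).snd : NPX B)), psiMem u n z a⟩
          : ↥(pbSub u)) = 0 := by
        apply Subtype.ext
        show ((((z.1.1 : MA A (Fin n →₀ ℕ)).coeff a).snd,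
          (((z.1.2 : MA (NPX B) (Fin n →₀ ℕ)).coeff a).snd : NPX B)) : A × NPX B) = ((0 : A), (0 : NPX B))
        rw [h1, h2, Unitization.snd_zero, Unitization.snd_zero]
      refine ha ?_
      show ((⟨(((z.1.1 : MA A (Fin n →₀ ℕ)).coeff a).snd,
        (((z.1.2 : MA (NPX B) (Fin n →₀ ℕ)).coeff a).snd : NPX B)), psiMem u n z a⟩
        : ↥(pbSub u)) : URing ↥(pbSub u)) = 0
      rw [h3]
      exact Unitization.inr_zero ℤ)

theorem iota_psiFun (z : ↥(pb2Sub (EnMap u n) (EnMap (ev0 B) n))) :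
    MAmap (NonUnitalSubringClass.subtype (pbSub u)) (psiFun u n z)
      = phiFun (cPsi A B n) (cPsi_zero n) ↑z.1.1 ↑z.1.2 := by
  refine AddMonoidAlgebra.ext (Finsupp.ext fun a => ?_)
  rw [MAmap_apply, phiFun_apply]
  show uMap (NonUnitalSubringClass.subtype (pbSub u))
      ((⟨_, psiMem u n z a⟩ : ↥(pbSub u)) : URing ↥(pbSub u)) = _
  rw [uMap_inr]
  rfl

/-- The homomorphism `ψ : EⁿA ×_{EⁿB} Eⁿ(B[x]) → Eⁿ(A')`. -/
def psiHom : ↥(pb2Sub (EnMap u n) (EnMap (ev0 B) n)) →ₙ+* ↥(EnSub ↥(pbSub u) n) where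
  toFun z := ⟨psiFun u n z, by
    refine ⟨fun a => Unitization.fst_inr _ _, fun a ha => ?_⟩
    show ((⟨_, psiMem u n z a⟩ : ↥(pbSub u)) : URing ↥(pbSub u)) = 0
    have h3 : (⟨(((z.1.1 : MA A (Fin n →₀ ℕ)).coeff a).snd,
        (((z.1.2 : MA (NPX B) (Fin n →₀ ℕ)).coeff a).snd : NPX B)), psiMem u n z a⟩
        : ↥(pbSub u)) = 0 := by
      apply Subtype.ext
      show ((((z.1.1 : MA A (Fin n →₀ ℕ)).coeff a).snd,
        (((z.1.2 : MA (NPX B) (Fin n →₀ ℕ)).coeff a).snd : NPX B)) : A × NPX B) = ((0 : A), (0 : NPX B))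
      rw [z.1.1.2.2 a ha, z.1.2.2.2 a ha, Unitization.snd_zero, Unitization.snd_zero]
    rw [h3]
    exact Unitization.inr_zero ℤ⟩
  map_zero' := by
    apply Subtype.ext
    apply MAmap_injective (NonUnitalSubringClass.subtype (pbSub u)) Subtype.val_injective
    show MAmap _ (psiFun u n 0) = MAmap _ (0 : MA ↥(pbSub u) (Fin n →₀ ℕ))
    rw [iota_psiFun, map_zero]
    show phiFun (cPsi A B n) (cPsi_zero n) 0 0 = 0
    exact phiFun_zero _ _
  map_add' z w := by
    apply Subtype.ext
    apply MAmap_injective (NonUnitalSubringClass.subtype (pbSub u)) Subtype.val_injective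
    show MAmap _ (psiFun u n (z + w)) = MAmap _ (psiFun u n z + psiFun u n w)
    rw [map_add, iota_psiFun, iota_psiFun, iota_psiFun,
      ← phiFun_add (cPsi A B n) (cPsi_zero n) (cPsi_add n)]
    rfl
  map_mul' z w := by
    apply Subtype.ext
    apply MAmap_injective (NonUnitalSubringClass.subtype (pbSub u)) Subtype.val_injective
    show MAmap _ (psiFun u n (z * w)) = MAmap _ (psiFun u n z * psiFun u n w)
    rw [map_mul, iota_psiFun, iota_psiFun, iota_psiFun,
      ← phiFun_mul (cPsi A B n) (cPsi_zero n) (cPsi_add n) (cPsi_mul n) _ _ _ _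
        z.1.1.2.1 w.1.1.2.1 z.1.2.2.1 w.1.2.2.1]
    rfl

theorem psi_comp :
    (EnMap (pbP u) n).comp (psiHom u n)
      = (EnMap (ev1 B) n).comp (pb2Pr2 (EnMap u n) (EnMap (ev0 B) n)) := by
  refine NonUnitalRingHom.ext fun z => ?_
  apply Subtype.ext
  refine AddMonoidAlgebra.ext (Finsupp.ext fun a => ?_)
  show (MAmap (pbP u) (psiFun u n z)).coeff a
    = (MAmap (ev1 B) (z.1.2 : MA (NPX B) (Fin n →₀ ℕ))).coeff a
  rw [MAmap_apply, MAmap_apply]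
  show uMap (pbP u) ((⟨_, psiMem u n z a⟩ : ↥(pbSub u)) : URing ↥(pbSub u)) = _
  rw [uMap_inr]
  apply Unitization.ext
  · rw [Unitization.fst_inr, uMap_fst]
    exact (z.1.2.2.1 a).symm
  · rw [Unitization.snd_inr, uMap_snd]
    rfl

theorem part2 (F : RingFunctor) (hF : LeftExact F) : FFibration F (pbP u) := by
  refine ⟨pbP_surjective u, fun n hn => ?_⟩
  intro y
  obtain ⟨-, hsurj⟩ := hF.2 ↥(EnSub A n) ↥(EnSub (NPX B) n) ↥(EnSub B n)
    (EnMap u n) (EnMap (ev0 B) n)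
  have hw : F.map (EnMap u n) (F.map (zeroNRH ↥(EnSub B n) ↥(EnSub A n)) y)
      = F.map (EnMap (ev0 B) n) (F.map (lamHom B n hn) y) := by
    have h1 := congrFun (F.map_comp (zeroNRH ↥(EnSub B n) ↥(EnSub A n)) (EnMap u n)) y
    have h2 := congrFun (F.map_comp (lamHom B n hn) (EnMap (ev0 B) n)) y
    show (F.map (EnMap u n) ∘ F.map (zeroNRH ↥(EnSub B n) ↥(EnSub A n))) y
      = (F.map (EnMap (ev0 B) n) ∘ F.map (lamHom B n hn)) y
    rw [← F.map_comp, ← F.map_comp, lam_ev0 u n hn]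
  obtain ⟨z', hz'⟩ := hsurj ⟨(F.map (zeroNRH ↥(EnSub B n) ↥(EnSub A n)) y,
    F.map (lamHom B n hn) y), hw⟩
  have hz2 : F.map (pb2Pr2 (EnMap u n) (EnMap (ev0 B) n)) z' = F.map (lamHom B n hn) y :=
    congrArg Prod.snd (congrArg Subtype.val hz')
  refine ⟨F.map (psiHom u n) z', ?_⟩
  calc F.map (EnMap (pbP u) n) (F.map (psiHom u n) z')
      = F.map ((EnMap (pbP u) n).comp (psiHom u n)) z' := by rw [F.map_comp]; rfl
    _ = F.map ((EnMap (ev1 B) n).comp (pb2Pr2 (EnMap u n) (EnMap (ev0 B) n))) z' := by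
        rw [psi_comp]
    _ = F.map (EnMap (ev1 B) n) (F.map (pb2Pr2 (EnMap u n) (EnMap (ev0 B) n)) z') := by
        rw [F.map_comp]; rfl
    _ = F.map (EnMap (ev1 B) n) (F.map (lamHom B n hn) y) := by rw [hz2]
    _ = F.map ((EnMap (ev1 B) n).comp (lamHom B n hn)) y := by rw [F.map_comp]; rfl
    _ = y := by rw [lam_ev1, F.map_id]; rfl

end Part2

/-- for a left exact functor `F`, every homomorphism `u : A → B` factors as
`u = p ∘ i` with `p` an `F`-fibration and `i` an elementary homotopy equivalence; concretely
`A' = A ×_B B[x]`, `i(a) = (a, u(a))` and `p(a, f) = f(1)`. -/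
theorem ffibration_factorization (F : RingFunctor) (hF : LeftExact F)
    (A B : Type) [NonUnitalRing A] [NonUnitalRing B] (u : A →ₙ+* B) :
    (pbP u).comp (pbI u) = u ∧ FFibration F (pbP u) ∧ ElemHomotopyEquiv (pbI u) :=
  ⟨part1 u, part2 u F hF, part3 u⟩
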